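/- Let N ≥ 2 be an even natural number, let φ*_N = sgn(sin(2·θ*_N)) · π/(4N), and for φ ∈ ℝ let θ(φ) = ((N−1)/(N+1))·φ + θ*_N, φ' = φ·N/2, and θ' = θ(φ) − ((N−2)/2)·φ. Then for every φ lying between 0 and φ*_N inclusive, the pair (φ', θ') belongs to the set ℱ. -/

import Mathlib

open Real

/-- The set `𝒢 = (π/4, π/2) ∪ (π/2, 3π/4) ∪ (5π/4, 3π/2) ∪ (3π/2, 7π/4)`. -/
noncomputable def Gset : Set ℝ :=
  Set.Ioo (π / 4) (π / 2) ∪ Set.Ioo (π / 2) (3 * π / 4)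
    ∪ Set.Ioo (5 * π / 4) (3 * π / 2) ∪ Set.Ioo (3 * π / 2) (7 * π / 4)

/-- The set `ℱ = ((−π/4, π/4) × 𝒢) ∪ (((−π/4, π/4) \ {0}) × {π/2, 3π/2}) ⊆ ℝ²`. -/
noncomputable def Fset : Set (ℝ × ℝ) :=
  (Set.Ioo (-(π / 4)) (π / 4) ×ˢ Gset)
    ∪ ((Set.Ioo (-(π / 4)) (π / 4) \ {0}) ×ˢ ({π / 2, 3 * π / 2} : Set ℝ))

/-- The value `t_N` defined, for even `N`, according to `N mod 8`. -/
noncomputable def tval (N : ℕ) : ℝ :=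
  if N % 8 = 2 then (N : ℝ) / 4 + 1 / 2
  else if N % 8 = 4 then (N : ℝ) / 4
  else if N % 8 = 6 then 3 * (N : ℝ) / 4 + 1 / 2
  else 3 * (N : ℝ) / 4 + 1

/-- The angle `θ*_N = 2π t_N/(N+1)`. -/
noncomputable def thetaStar (N : ℕ) : ℝ := 2 * π * tval N / ((N : ℝ) + 1)


/-!
`θ*_N` lies at distance `π/(2(N+1))` from `c ∈ {π/2, 3π/2}`, on the side `s = ±1`, and since
`2c ≡ π (mod 2π)` the sign of `sin 2θ*_N` is `-s`. Writing `φ = -s u` with `0 ≤ u ≤ π/(4N)`,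
`θ' = c + s (π + N(N-3)u)/(2(N+1))`, and the offset `(π + N(N-3)u)/(2(N+1))` lies strictly between
`0` and `π/4`, so `θ'` avoids `c` and stays inside `𝒢`; meanwhile `|φ'| ≤ π/8`.
-/

lemma exists_thetaStar_eq_add (N : ℕ) :
    ∃ c s : ℝ, (c = π / 2 ∨ c = 3 * π / 2) ∧ (s = 1 ∨ s = -1) ∧
      thetaStar N = c + s * (π / (2 * (N + 1))) := by
  have hN : (N : ℝ) + 1 ≠ 0 := by positivity
  unfold thetaStar tval
  split_ifs
  · exact ⟨π / 2, 1, .inl rfl, .inl rfl, by field_simp; ring⟩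
  · exact ⟨π / 2, -1, .inl rfl, .inr rfl, by field_simp; ring⟩
  · exact ⟨3 * π / 2, -1, .inr rfl, .inr rfl, by field_simp; ring⟩
  · exact ⟨3 * π / 2, 1, .inr rfl, .inl rfl, by field_simp; ring⟩

lemma sign_sin_two_mul_add {c s y : ℝ} (hc : c = π / 2 ∨ c = 3 * π / 2)
    (hs : s = 1 ∨ s = -1) (hy₀ : 0 < y) (hy : y < π / 2) :
    Real.sign (sin (2 * (c + s * y))) = -s := by
  have hsin : 0 < sin (2 * y) := sin_pos_of_pos_of_lt_pi (by linarith) (by linarith)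
  have hshift : sin (2 * (c + s * y)) = -sin (2 * (s * y)) := by
    rcases hc with rfl | rfl
    · rw [show 2 * (π / 2 + s * y) = 2 * (s * y) + π by ring, sin_add_pi]
    · rw [show 2 * (3 * π / 2 + s * y) = 2 * (s * y) + π + 2 * π by ring,
        sin_add_two_pi, sin_add_pi]
  rcases hs with rfl | rfl
  · rw [hshift, one_mul, sign_of_neg (by linarith)]
  · rw [hshift, neg_one_mul, mul_neg, sin_neg, neg_neg, sign_of_pos hsin, neg_neg]

lemma add_mul_mem_Gset {c s w : ℝ} (hc : c = π / 2 ∨ c = 3 * π / 2) (hs : s = 1 ∨ s = -1)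
    (hw₀ : 0 < w) (hw : w < π / 4) : c + s * w ∈ Gset := by
  simp only [Gset, Set.mem_union, Set.mem_Ioo]
  rcases hc with rfl | rfl <;> rcases hs with rfl | rfl
  · exact .inl (.inl (.inr ⟨by linarith, by linarith⟩))
  · exact .inl (.inl (.inl ⟨by linarith, by linarith⟩))
  · exact .inr ⟨by linarith, by linarith⟩
  · exact .inl (.inr ⟨by linarith, by linarith⟩)

lemma neg_mul_mem_Icc_of_mem_uIcc {s a φ : ℝ} (hs : s = 1 ∨ s = -1) (ha : 0 ≤ a)
    (hφ : φ ∈ Set.uIcc 0 (-s * a)) : -s * φ ∈ Set.Icc 0 a := by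
  rcases hs with rfl | rfl
  · rw [Set.uIcc_of_ge (by linarith)] at hφ
    exact ⟨by linarith [hφ.2], by linarith [hφ.1]⟩
  · rw [Set.uIcc_of_le (by linarith)] at hφ
    exact ⟨by linarith [hφ.1], by linarith [hφ.2]⟩

lemma pi_add_mul_bounds {x u : ℝ} (hx : 1 < x) (hu₀ : 0 ≤ u) (hu : x * u ≤ π / 4) :
    0 < π + x * (x - 3) * u ∧ π + x * (x - 3) * u < π / 2 * (x + 1) := by
  have hxu : 0 ≤ x * u := by positivity
  have h : (x - 1) * (x * u) ≤ (x - 1) * (π / 4) := by gcongr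
  constructor <;> nlinarith [pi_pos]

theorem shifted_angles_mem_Fset_general (N : ℕ) (hN : 2 ≤ N)
    (φstar : ℝ) (hφstar : φstar = Real.sign (sin (2 * thetaStar N)) * (π / (4 * (N : ℝ))))
    (φ : ℝ) (hφ : φ ∈ Set.uIcc 0 φstar) :
    (φ * (N : ℝ) / 2,
      (((N : ℝ) - 1) / ((N : ℝ) + 1)) * φ + thetaStar N - (((N : ℝ) - 2) / 2) * φ)
      ∈ Fset := by
  obtain ⟨c, s, hc, hs, hθ⟩ := exists_thetaStar_eq_add N
  have hx : (1 : ℝ) < N := by exact_mod_cast hN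
  have hsign : Real.sign (sin (2 * thetaStar N)) = -s :=
    hθ ▸ sign_sin_two_mul_add hc hs (by positivity)
      (div_lt_div_of_pos_left pi_pos two_pos (by linarith))
  rw [hφstar, hsign] at hφ
  obtain ⟨hu₀, hu⟩ := neg_mul_mem_Icc_of_mem_uIcc hs (by positivity) hφ
  have hxu : (N : ℝ) * (-s * φ) ≤ π / 4 := by
    rw [le_div_iff₀ (by positivity)] at hu; linarith
  obtain ⟨hw₀, hw⟩ := pi_add_mul_bounds hx hu₀ hxu
  have hs2 : s * s = 1 := by rcases hs with rfl | rfl <;> norm_num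
  have hθ' : (((N : ℝ) - 1) / ((N : ℝ) + 1)) * φ + thetaStar N - (((N : ℝ) - 2) / 2) * φ
      = c + s * ((π + N * (N - 3) * (-s * φ)) / (2 * (N + 1))) := by
    rw [hθ]; field_simp; linear_combination (N : ℝ) * (N - 3) * φ * hs2
  refine Or.inl ⟨?_, hθ' ▸ add_mul_mem_Gset hc hs (div_pos hw₀ (by positivity)) ?_⟩
  · have hN₀ : (0 : ℝ) ≤ N := by positivity
    rcases hs with rfl | rfl <;> constructor <;> nlinarith [pi_pos, mul_nonneg hu₀ hN₀]
  · rw [div_lt_iff₀ (by positivity)]; linarith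

/-- Proposition 7: for even `N ≥ 2`, `φ*_N = sgn(sin(2θ*_N))·π/(4N)`,
`θ(φ) = ((N−1)/(N+1))φ + θ*_N`, `φ' = φN/2` and `θ' = θ(φ) − ((N−2)/2)φ`, the pair
`(φ', θ')` belongs to `ℱ` for every `φ` between `0` and `φ*_N` inclusive. -/
theorem shifted_angles_mem_Fset (N : ℕ) (hN : 2 ≤ N) (hNeven : N % 2 = 0)
    (φstar : ℝ) (hφstar : φstar = Real.sign (sin (2 * thetaStar N)) * (π / (4 * (N : ℝ))))
    (φ : ℝ) (hφ : φ ∈ Set.uIcc 0 φstar) :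
    (φ * (N : ℝ) / 2,
      (((N : ℝ) - 1) / ((N : ℝ) + 1)) * φ + thetaStar N - (((N : ℝ) - 2) / 2) * φ)
      ∈ Fset :=
  shifted_angles_mem_Fset_general N hN φstar hφstar φ hφ
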